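/- arXiv:0812.4047 — 2 statements merged into one kernel-verified Lean document; each statement's English description precedes it below -/
import Mathlib

section
/- Generalized Dobiński formula: for every integer p ≥ 1, every n ≥ 0, and every real x, the series Σ_{k=0}^∞ x^k·B_n^{p−1}(k)/k! converges and B_n^p(x) = e^{−x}·Σ_{k=0}^∞ x^k·B_n^{p−1}(k)/k!. (For p = 1 this is Dobiński's formula B_n(x) = e^{−x} Σ_{k≥0} x^k k^n/k!.) -/
/-- Stirling numbers of the second kind. -/
def S2 : ℕ → ℕ → ℕ
  | 0, 0 => 1
  | 0, _ + 1 => 0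
  | _ + 1, 0 => 0
  | n + 1, m + 1 => (m + 1) * S2 n (m + 1) + S2 n m

/-- Entries `S^p_{n,m}` of the `p`-th power of the Stirling matrix (for `p ≥ 1`;
the value at `p = 0` is junk). -/
def Sp : ℕ → ℕ → ℕ → ℕ
  | 0, _, _ => 0
  | 1, n, m => S2 n m
  | p + 2, n, m => ∑ k ∈ Finset.range (n + 1), S2 n k * Sp (p + 1) k m

/-- Higher order Bell polynomials: `B_n^0(x) = x^n`, `B_n^p(x) = ∑_{m=0}^n S^p_{n,m} x^m`. -/
noncomputable def BellP : ℕ → ℕ → ℝ → ℝ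
  | 0, n, x => x ^ n
  | p + 1, n, x => ∑ m ∈ Finset.range (n + 1), (Sp (p + 1) n m : ℝ) * x ^ m

/-!
Expanding `k ^ n` in falling factorials, `k ^ n = ∑ₘ S(n,m) k (k-1) ⋯ (k-m+1)`, and using
`∑ₖ xᵏ k (k-1) ⋯ (k-m+1) / k! = xᵐ eˣ` gives Dobiński's formula `∑ₖ xᵏ kⁿ / k! = eˣ B_n(x)`.
Since `S^{p+1} = S · S^p`, the higher Bell polynomials satisfy `B_n^{p+1} = ∑ₖ S(n,k) B_k^p`, so the
general formula follows by induction on `p`, summing the formulas for the `B_k^p` termwise.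
-/

open Finset
open scoped Nat

theorem S2_eq_stirlingSecond : S2 = Nat.stirlingSecond := by
  funext n m
  induction n generalizing m with
  | zero => cases m <;> rfl
  | succ n ih => cases m <;> simp [S2, Nat.stirlingSecond_succ_succ, ih]

theorem pow_eq_sum_stirlingSecond_mul_descPochhammer_eval {R : Type*} [CommRing R] (x : R)
    (n : ℕ) :
    x ^ n = ∑ m ∈ range (n + 1), (n.stirlingSecond m : R) * (descPochhammer R m).eval x := by
  induction n with
  | zero => simp
  | succ n ih =>
    set P : ℕ → R := fun m => (descPochhammer R m).eval x
    set g : ℕ → R := fun m => m * n.stirlingSecond m * P m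
    have hshift : ∑ m ∈ range (n + 1), g (m + 1) = ∑ m ∈ range (n + 1), g m := by
      have hlast : g (n + 1) = 0 := by
        simp [g, Nat.stirlingSecond_eq_zero_of_lt n.lt_succ_self]
      have hfirst : g 0 = 0 := by simp [g]
      have h₁ := sum_range_succ g (n + 1)
      have h₂ := sum_range_succ' g (n + 1)
      rw [hlast, add_zero] at h₁
      rw [hfirst, add_zero] at h₂
      rw [← h₂, h₁]
    have hmul : ∀ m : ℕ, x * P m = P (m + 1) + m * P m := fun m => by
      simp only [P, descPochhammer_succ_eval]; ring
    rw [_root_.pow_succ', ih, mul_sum, sum_range_succ' _ (n + 1)]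
    simp only [Nat.stirlingSecond_succ_succ, Nat.stirlingSecond_succ_zero, Nat.cast_zero, zero_mul,
      add_zero]
    calc ∑ m ∈ range (n + 1), x * ((n.stirlingSecond m : R) * P m)
        = ∑ m ∈ range (n + 1), ((n.stirlingSecond m : R) * P (m + 1) + g m) :=
          sum_congr rfl fun m _ => by rw [mul_left_comm, hmul]; ring
      _ = ∑ m ∈ range (n + 1), ((n.stirlingSecond m : R) * P (m + 1) + g (m + 1)) := by
          rw [sum_add_distrib, sum_add_distrib, hshift]
      _ = _ := sum_congr rfl fun m _ => by simp only [g]; push_cast; ring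

theorem Real.hasSum_pow_mul_descFactorial_div_factorial (x : ℝ) (m : ℕ) :
    HasSum (fun k : ℕ => x ^ k * k.descFactorial m / k !) (x ^ m * Real.exp x) := by
  have hshift : ∀ k, x ^ (k + m) * (k + m).descFactorial m / (k + m)! = x ^ m * (x ^ k / k !) := by
    intro k
    have hfac := Nat.factorial_mul_descFactorial (Nat.le_add_left m k)
    rw [Nat.add_sub_cancel] at hfac
    have hD : ((k + m).descFactorial m : ℝ) ≠ 0 := by
      exact_mod_cast (Nat.descFactorial_pos.2 (Nat.le_add_left m k)).ne'
    rw [← hfac, pow_add]; push_cast; field_simp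
  have hinit : ∑ i ∈ range m, x ^ i * i.descFactorial m / (i ! : ℝ) = 0 :=
    sum_eq_zero fun i hi => by simp [Nat.descFactorial_eq_zero_iff_lt.2 (mem_range.1 hi)]
  refine (hasSum_nat_add_iff' m).mp ?_
  rw [hinit, sub_zero]
  simp only [hshift]
  exact (Real.exp_eq_exp_ℝ ▸ NormedSpace.expSeries_div_hasSum_exp x).mul_left _

theorem Real.hasSum_pow_mul_pow_div_factorial (x : ℝ) (n : ℕ) :
    HasSum (fun k : ℕ => x ^ k * (k : ℝ) ^ n / k !)
      (Real.exp x * ∑ m ∈ range (n + 1), (n.stirlingSecond m : ℝ) * x ^ m) := by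
  have hterm : ∀ k : ℕ, x ^ k * (k : ℝ) ^ n / k ! =
      ∑ m ∈ range (n + 1), (n.stirlingSecond m : ℝ) * (x ^ k * k.descFactorial m / k !) := by
    intro k
    simp only [pow_eq_sum_stirlingSecond_mul_descPochhammer_eval (k : ℝ) n,
      descPochhammer_eval_eq_descFactorial, mul_sum, sum_div]
    exact sum_congr rfl fun m _ => by ring
  have hvalue : Real.exp x * ∑ m ∈ range (n + 1), (n.stirlingSecond m : ℝ) * x ^ m =
      ∑ m ∈ range (n + 1), (n.stirlingSecond m : ℝ) * (x ^ m * Real.exp x) := by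
    rw [mul_sum]
    exact sum_congr rfl fun m _ => by ring
  simp only [hterm]
  rw [hvalue]
  exact hasSum_sum fun m _ => (Real.hasSum_pow_mul_descFactorial_div_factorial x m).mul_left _

theorem Sp_eq_zero_of_lt (p : ℕ) {n m : ℕ} (h : n < m) : Sp (p + 1) n m = 0 := by
  induction p generalizing n with
  | zero => simp only [Sp, S2_eq_stirlingSecond, Nat.stirlingSecond_eq_zero_of_lt h]
  | succ p ih =>
    refine sum_eq_zero fun k hk => ?_
    rw [ih (by grind), mul_zero]

theorem BellP_succ (p n : ℕ) (y : ℝ) :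
    BellP (p + 1) n y = ∑ k ∈ range (n + 1), (S2 n k : ℝ) * BellP p k y := by
  cases p with
  | zero => rfl
  | succ p =>
    have htrunc : ∀ k ∈ range (n + 1),
        ∑ m ∈ range (n + 1), (Sp (p + 1) k m : ℝ) * y ^ m =
          ∑ m ∈ range (k + 1), (Sp (p + 1) k m : ℝ) * y ^ m := by
      intro k hk
      refine (sum_subset (range_subset_range.2 (by grind)) fun m _ hm => ?_).symm
      rw [Sp_eq_zero_of_lt p (by grind), Nat.cast_zero, zero_mul]
    simp only [BellP, Sp]
    push_cast
    simp only [sum_mul, mul_assoc]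
    rw [sum_comm]
    simp only [← mul_sum]
    exact sum_congr rfl fun k hk => by rw [htrunc k hk]

theorem hasSum_pow_mul_BellP_div_factorial (p n : ℕ) (x : ℝ) :
    HasSum (fun k : ℕ => x ^ k * BellP p n k / k !) (Real.exp x * BellP (p + 1) n x) := by
  induction p generalizing n with
  | zero =>
    simpa only [BellP, Sp, S2_eq_stirlingSecond] using Real.hasSum_pow_mul_pow_div_factorial x n
  | succ p ih =>
    have hterm : ∀ k : ℕ, x ^ k * BellP (p + 1) n k / k ! =
        ∑ j ∈ range (n + 1), (S2 n j : ℝ) * (x ^ k * BellP p j k / k !) := by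
      intro k
      rw [BellP_succ, mul_sum, sum_div]
      exact sum_congr rfl fun j _ => by ring
    have hvalue : Real.exp x * BellP (p + 2) n x =
        ∑ j ∈ range (n + 1), (S2 n j : ℝ) * (Real.exp x * BellP (p + 1) j x) := by
      rw [BellP_succ, mul_sum]
      exact sum_congr rfl fun j _ => by ring
    simp only [hterm]
    rw [hvalue]
    exact hasSum_sum fun j _ => (ih j).mul_left _

/-- Generalized Dobiński formula: `B_n^p(x) = e^{-x} ∑_{k≥0} x^k B_n^{p-1}(k) / k!`,
the series being convergent. -/
theorem generalized_dobinski (p : ℕ) (hp : 1 ≤ p) (n : ℕ) (x : ℝ) :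
    Summable (fun k : ℕ => x ^ k * BellP (p - 1) n (k : ℝ) / k.factorial) ∧
      BellP p n x =
        Real.exp (-x) * ∑' k : ℕ, x ^ k * BellP (p - 1) n (k : ℝ) / k.factorial := by
  obtain ⟨q, rfl⟩ := Nat.exists_eq_add_of_le' hp
  have h := hasSum_pow_mul_BellP_div_factorial q n x
  rw [Nat.add_sub_cancel]
  refine ⟨h.summable, ?_⟩
  rw [h.tsum_eq, ← mul_assoc, ← Real.exp_add, neg_add_cancel, Real.exp_zero, one_mul]
end

section
/- The eigensequence of the Stirling transform satisfies, for every n ≥ 0: C_{n+2} = Σ_{k=0}^n S(n,k)·(C_{k+1} + k·C_k). -/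
/-! Apply the defining recurrence at `n + 1`: the `k = 0` term drops out since `S(n+1, 0) = 0`,
`S(n+1, k+1) = (k+1) S(n, k+1) + S(n, k)` splits the rest into two sums, and shifting the index
in the first one turns `(k+1) C_{k+1} S(n, k+1)` into `k C_k S(n, k)`. -/

open Finset Nat

theorem S2_eq_stirlingSecond_s14 : ∀ n k, S2 n k = stirlingSecond n k
  | 0, 0 | 0, _ + 1 | _ + 1, 0 => rfl
  | n + 1, k + 1 => by
    rw [S2, stirlingSecond_succ_succ, S2_eq_stirlingSecond_s14 n (k + 1), S2_eq_stirlingSecond_s14 n k]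

section

variable {R : Type*} [CommSemiring R]

theorem sum_range_succ_mul_stirlingSecond_succ (f : ℕ → R) (n : ℕ) :
    ∑ k ∈ range (n + 1), ((k + 1 : ℕ) : R) * f (k + 1) * stirlingSecond n (k + 1) =
      ∑ k ∈ range (n + 1), (k : R) * f k * stirlingSecond n k := by
  have hsplit := sum_range_succ' (fun k ↦ (k : R) * f k * stirlingSecond n k) (n + 1)
  rw [sum_range_succ, stirlingSecond_eq_zero_of_lt n.lt_succ_self] at hsplit
  simpa using hsplit.symm

theorem sum_mul_stirlingSecond_succ (f : ℕ → R) (n : ℕ) :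
    ∑ k ∈ range (n + 2), f k * stirlingSecond (n + 1) k =
      ∑ k ∈ range (n + 1), (stirlingSecond n k : R) * (f (k + 1) + k * f k) := by
  rw [sum_range_succ', stirlingSecond_succ_zero, Nat.cast_zero, mul_zero, add_zero]
  calc ∑ k ∈ range (n + 1), f (k + 1) * stirlingSecond (n + 1) (k + 1)
      = ∑ k ∈ range (n + 1), (((k + 1 : ℕ) : R) * f (k + 1) * stirlingSecond n (k + 1) +
          stirlingSecond n k * f (k + 1)) := by
        refine sum_congr rfl fun k _ ↦ ?_
        rw [stirlingSecond_succ_succ]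
        push_cast
        ring
    _ = ∑ k ∈ range (n + 1), ((k : R) * f k * stirlingSecond n k +
          stirlingSecond n k * f (k + 1)) := by
        rw [sum_add_distrib, sum_add_distrib, sum_range_succ_mul_stirlingSecond_succ]
    _ = _ := sum_congr rfl fun k _ ↦ by ring

end

theorem eigensequence_recurrence_general (c : ℕ → ℝ)
    (hrec : ∀ n, 1 ≤ n → c (n + 1) = ∑ k ∈ Finset.range (n + 1), c k * S2 n k) (n : ℕ) :
    c (n + 2) = ∑ k ∈ Finset.range (n + 1), (S2 n k : ℝ) * (c (k + 1) + k * c k) := by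
  simp only [hrec (n + 1) n.succ_pos, S2_eq_stirlingSecond_s14]
  exact sum_mul_stirlingSecond_succ c n

/-- If `c` is the eigensequence of the Stirling transform, then
`C_{n+2} = ∑_{k=0}^n S(n,k) (C_{k+1} + k C_k)`. -/
theorem eigensequence_recurrence (c : ℕ → ℝ) (h0 : c 0 = 0) (h1 : c 1 = 1)
    (hrec : ∀ n, 1 ≤ n → c (n + 1) = ∑ k ∈ Finset.range (n + 1), c k * S2 n k) (n : ℕ) :
    c (n + 2) = ∑ k ∈ Finset.range (n + 1), (S2 n k : ℝ) * (c (k + 1) + k * c k) :=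
  eigensequence_recurrence_general c hrec n
end
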